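/- arXiv:1506.00718 — 3 statements merged into one kernel-verified Lean document; each statement's English description precedes it below -/
import Mathlib

section
/- Let φ(μ,λ,τ) = μ(e^{(k-r+1)λ} - 1)·C(k,r-1)·(1+τ)^{r-1} - λτ with k ≥ r ≥ 3 integers. If 0 < μ < μ_c(k,r) := C(k,r)^{-1}·(r-2)^{r-2}/(r(r-1)^{r-1}), then for τ = 1/(r-2) there exists λ > 0 such that φ(μ,λ,τ) < 0. -/
/-!
Since `φ(μ, 0, τ) = 0`, it suffices that `∂φ/∂λ (μ, 0, τ) = μ (k-r+1) C(k,r-1) (1+τ)^(r-1) - τ`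
is negative. For `τ = 1/(r-2)` we have `1 + τ = (r-1)/(r-2)`, and
`C(k,r-1) (k-r+1) = C(k,r) r`, so this derivative vanishes exactly at `μ = μ_c(k,r)`.
-/

open Filter Topology

theorem exists_gt_lt_of_hasDerivAt_neg {f : ℝ → ℝ} {f' a : ℝ} (hf : HasDerivAt f f' a)
    (hf' : f' < 0) : ∃ x, a < x ∧ f x < f a := by
  have hslope : ∀ᶠ t in 𝓝[>] (0 : ℝ), t⁻¹ • (f (a + t) - f a) < 0 :=
    hf.tendsto_slope_zero_right.eventually_lt_const hf'
  obtain ⟨t, hneg, ht⟩ := (hslope.and self_mem_nhdsWithin).exists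
  refine ⟨a + t, lt_add_of_pos_right a ht, ?_⟩
  rw [smul_eq_mul] at hneg
  have := (pos_iff_neg_of_mul_neg hneg).1 (inv_pos.2 ht)
  linarith

theorem Nat.cast_choose_pred_mul {R : Type*} [CommRing R] {k r : ℕ} (hr : 1 ≤ r) (hk : r ≤ k) :
    (k.choose (r - 1) : R) * ((k : R) - r + 1) = k.choose r * r := by
  obtain ⟨m, rfl⟩ : ∃ m, r = m + 1 := ⟨r - 1, by omega⟩
  have h := congrArg (Nat.cast : ℕ → R) (Nat.choose_succ_right_eq k m)
  rw [Nat.add_sub_cancel]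
  push_cast [Nat.cast_sub (show m ≤ k by omega)] at h ⊢
  linear_combination h.symm

/-- `μ_c(k,r)` is the value of `μ` at which `∂φ/∂λ (μ, 0, 1/(r-2))` vanishes. -/
theorem critical_mu_eq {k r : ℕ} (hr : 3 ≤ r) (hk : r ≤ k) :
    ((k.choose r : ℝ))⁻¹ * (((r : ℝ) - 2) ^ (r - 2) / ((r : ℝ) * ((r : ℝ) - 1) ^ (r - 1))) =
      (1 / ((r : ℝ) - 2)) /
        (((k : ℝ) - r + 1) * k.choose (r - 1) * (1 + 1 / ((r : ℝ) - 2)) ^ (r - 1)) := by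
  obtain ⟨s, rfl⟩ : ∃ s, r = s + 2 := ⟨r - 2, by omega⟩
  have hs : (0 : ℝ) < s := by exact_mod_cast (by omega : 0 < s)
  have hchoose := Nat.cast_choose_pred_mul (R := ℝ) (k := k) (r := s + 2) (by omega) hk
  have hkc : (0 : ℝ) < k.choose (s + 2) := by exact_mod_cast Nat.choose_pos hk
  simp only [Nat.add_sub_cancel, show s + 2 - 1 = s + 1 by omega] at hchoose ⊢
  push_cast at hchoose ⊢
  have hsub2 : (s : ℝ) + 2 - 2 = s := by ring
  have hsub1 : (s : ℝ) + 2 - 1 = s + 1 := by ring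
  have h1 : (1 : ℝ) + 1 / s = (s + 1) / s := by field_simp
  rw [hsub2, hsub1, h1, div_pow, mul_comm ((k : ℝ) - (s + 2) + 1), hchoose]
  field_simp
  ring

theorem stmt_4_general (k r : ℕ) (hr : 3 ≤ r) (hk : r ≤ k) (μ : ℝ)
    (hμc : μ < ((k.choose r : ℝ))⁻¹ * (((r : ℝ) - 2) ^ (r - 2) /
      ((r : ℝ) * ((r : ℝ) - 1) ^ (r - 1)))) :
    ∃ lam : ℝ, 0 < lam ∧
      μ * (Real.exp (((k : ℝ) - r + 1) * lam) - 1) * (k.choose (r - 1) : ℝ)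
          * (1 + 1 / ((r : ℝ) - 2)) ^ (r - 1) - lam * (1 / ((r : ℝ) - 2)) < 0 := by
  set c : ℝ := (k : ℝ) - r + 1
  set C : ℝ := (k.choose (r - 1) : ℝ)
  set τ : ℝ := 1 / ((r : ℝ) - 2)
  set P : ℝ := (1 + τ) ^ (r - 1)
  have hr' : (3 : ℝ) ≤ r := by exact_mod_cast hr
  have hcCP : 0 < c * C * P := by
    have hk' : (r : ℝ) ≤ k := by exact_mod_cast hk
    have hc : 0 < c := by linarith
    have hC : 0 < C := Nat.cast_pos.2 (Nat.choose_pos (by omega))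
    have hτ : 0 < τ := one_div_pos.2 (by linarith)
    have hP : 0 < P := by positivity
    positivity
  have hslope : μ * (c * C * P) < τ := by
    rwa [critical_mu_eq hr hk, lt_div_iff₀ hcCP] at hμc
  have hφ : HasDerivAt (fun lam ↦ μ * (Real.exp (c * lam) - 1) * C * P - lam * τ)
      (μ * (c * C * P) - τ) 0 := by
    have hexp : HasDerivAt (fun lam ↦ Real.exp (c * lam)) c 0 := by
      simpa using ((hasDerivAt_id (0 : ℝ)).const_mul c).exp
    exact ((((hexp.sub_const 1).const_mul μ).mul_const C).mul_const P).sub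
      ((hasDerivAt_id' 0).mul_const τ) |>.congr_deriv (by ring)
  obtain ⟨lam, hlam, hneg⟩ := exists_gt_lt_of_hasDerivAt_neg hφ (by linarith)
  exact ⟨lam, hlam, by simpa using hneg⟩

/-- Let `φ(μ,λ,τ) = μ(e^{(k-r+1)λ} - 1)·C(k,r-1)·(1+τ)^(r-1) - λτ` with `k ≥ r ≥ 3` integers.
If `0 < μ < μ_c(k,r) = C(k,r)⁻¹·(r-2)^(r-2)/(r(r-1)^(r-1))`, then for `τ = 1/(r-2)`
there exists `λ > 0` such that `φ(μ,λ,τ) < 0`. -/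
theorem stmt_4 (k r : ℕ) (hr : 3 ≤ r) (hk : r ≤ k) (μ : ℝ) (hμ : 0 < μ)
    (hμc : μ < ((k.choose r : ℝ))⁻¹ * (((r : ℝ) - 2) ^ (r - 2) /
      ((r : ℝ) * ((r : ℝ) - 1) ^ (r - 1)))) :
    ∃ lam : ℝ, 0 < lam ∧
      μ * (Real.exp (((k : ℝ) - r + 1) * lam) - 1) * (k.choose (r - 1) : ℝ)
          * (1 + 1 / ((r : ℝ) - 2)) ^ (r - 1) - lam * (1 / ((r : ℝ) - 2)) < 0 :=
  stmt_4_general k r hr hk μ hμc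
end

section
/- Let φ(μ,λ,τ) = μ(e^{(k-r+1)λ} - 1)·C(k,r-1)·(1+τ)^{r-1} - λτ with k ≥ r ≥ 3 integers. If μ > μ_c(k,r) := C(k,r)^{-1}·(r-2)^{r-2}/(r(r-1)^{r-1}), then for every τ > 0 and every λ ≥ 0 one has μ·r·C(k,r)·(1+τ)^{r-1} - τ > 0, i.e., ∂φ/∂λ(μ,0,τ) > 0. -/
lemma key_amgm (n : ℕ) (hn : 2 ≤ n) (τ : ℝ) (hτ : 0 < τ) :
    (n : ℝ) ^ n * τ ≤ ((n : ℝ) - 1) ^ (n - 1) * (1 + τ) ^ n := by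
  set N : ℝ := (n : ℝ) with hNdef
  have hN : (2 : ℝ) ≤ N := by rw [hNdef]; exact_mod_cast hn
  have hm : 0 < N - 1 := by linarith
  have hNpos : (0 : ℝ) < N := by linarith
  set x : ℝ := 1 + τ with hxdef
  have hx : 0 < x := by simp [hxdef]; linarith
  have ht : (-2 : ℝ) ≤ (N - 1) * x / N - 1 := by
    have h0 : 0 < (N - 1) * x / N := by positivity
    linarith
  have hB := one_add_mul_le_pow ht n
  have h1 : (1 : ℝ) + ((N - 1) * x / N - 1) = (N - 1) * x / N := by ring
  rw [h1] at hB
  have h2 : (n : ℝ) * ((N - 1) * x / N - 1) = (N - 1) * x - N := by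
    rw [← hNdef]; field_simp
  rw [h2] at hB
  have h3 : ((N - 1) * x / N) ^ n = (N - 1) ^ n * x ^ n / N ^ n := by
    rw [div_pow, mul_pow]
  rw [h3] at hB
  -- hB : 1 + ((N-1)*x - N) ≤ (N-1)^n * x^n / N^n
  have hlhs : (N - 1) * τ = 1 + ((N - 1) * x - N) := by
    rw [hxdef]; ring
  have hB2 : (N - 1) * τ ≤ (N - 1) ^ n * x ^ n / N ^ n := by linarith [hB, hlhs.le, hlhs.ge]
  have hNn : (0 : ℝ) < N ^ n := by positivity
  rw [le_div_iff₀ hNn] at hB2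
  -- hB2 : (N-1)*τ*N^n ≤ (N-1)^n * x^n
  have hpow : (N - 1) ^ n = (N - 1) ^ (n - 1) * (N - 1) := by
    conv_lhs => rw [show n = (n - 1) + 1 by omega]
    rw [pow_succ]
  rw [hpow] at hB2
  have := (mul_le_mul_iff_of_pos_right hm).mp (by linarith [hB2] : (N ^ n * τ) * (N - 1) ≤ ((N - 1) ^ (n - 1) * x ^ n) * (N - 1))
  linarith

/-- If `μ > μ_c(k,r) = C(k,r)⁻¹·(r-2)^(r-2)/(r(r-1)^(r-1))` with `k ≥ r ≥ 3`, then for every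
`τ > 0` and every `λ ≥ 0` one has `μ·r·C(k,r)·(1+τ)^(r-1) - τ > 0`,
i.e., `∂φ/∂λ(μ,0,τ) > 0`. -/
theorem stmt_5 (k r : ℕ) (hr : 3 ≤ r) (hk : r ≤ k) (μ : ℝ)
    (hμc : μ > ((k.choose r : ℝ))⁻¹ * (((r : ℝ) - 2) ^ (r - 2) /
      ((r : ℝ) * ((r : ℝ) - 1) ^ (r - 1)))) :
    ∀ τ : ℝ, 0 < τ → ∀ lam : ℝ, 0 ≤ lam →
      μ * (r : ℝ) * (k.choose r : ℝ) * (1 + τ) ^ (r - 1) - τ > 0 := by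
  intro τ hτ lam _
  have hC : (0 : ℝ) < (k.choose r : ℝ) := by
    exact_mod_cast Nat.choose_pos hk
  have hrR : (3 : ℝ) ≤ (r : ℝ) := by exact_mod_cast hr
  have hrpos : (0 : ℝ) < (r : ℝ) := by linarith
  have hr1 : (0 : ℝ) < (r : ℝ) - 1 := by linarith
  -- key with n = r - 1
  have hn2 : 2 ≤ r - 1 := by omega
  have hcast : ((r - 1 : ℕ) : ℝ) = (r : ℝ) - 1 := by
    have : (1 : ℕ) ≤ r := by omega
    push_cast [Nat.cast_sub this]; ring
  have hkey := key_amgm (r - 1) hn2 τ hτ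
  rw [hcast] at hkey
  have hexp : r - 1 - 1 = r - 2 := by omega
  rw [hexp] at hkey
  have hsub : (r : ℝ) - 1 - 1 = (r : ℝ) - 2 := by ring
  rw [hsub] at hkey
  -- hkey : ((r:ℝ)-1)^(r-1) * τ ≤ ((r:ℝ)-2)^(r-2) * (1+τ)^(r-1)
  have hμ' : ((r : ℝ) - 2) ^ (r - 2) / ((r : ℝ) * ((r : ℝ) - 1) ^ (r - 1))
      < μ * (k.choose r : ℝ) := by
    have := (mul_lt_mul_iff_of_pos_right hC).mpr hμc
    calc ((r : ℝ) - 2) ^ (r - 2) / ((r : ℝ) * ((r : ℝ) - 1) ^ (r - 1))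
        = ((k.choose r : ℝ))⁻¹ * (((r : ℝ) - 2) ^ (r - 2) /
          ((r : ℝ) * ((r : ℝ) - 1) ^ (r - 1))) * (k.choose r : ℝ) := by
          field_simp
      _ < μ * (k.choose r : ℝ) := this
  have hr1n : (0 : ℝ) < ((r : ℝ) - 1) ^ (r - 1) := by positivity
  have hτx : (0 : ℝ) < (1 + τ) ^ (r - 1) := by positivity
  -- from hμ': τ < μ*r*C*(1+τ)^(r-1)
  have h4 : ((r : ℝ) - 2) ^ (r - 2) < μ * (k.choose r : ℝ) * ((r : ℝ) * ((r : ℝ) - 1) ^ (r - 1)) := by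
    rw [div_lt_iff₀ (by positivity)] at hμ'
    linarith
  nlinarith [mul_lt_mul_of_pos_right h4 hτx, hkey, mul_pos hr1n hτ]
end

section
/- Fix integers k ≥ r ≥ 2 and reals μ > 0, τ > 0, λ. Define for each n the sequence λ_j^{(s)} by λ_{k-r+1}^{(s)} = λ for all s, λ_j^{(0)} = 0 for j ≥ k-r+2, and λ_j^{(s)} = λ_j^{(s-1)} + log(1 - j/N(t-s+1) + (j/N(t-s+1))·e^{λ_{j-1}^{(s-1)}}) where N(t) = n - ℓ(n) - t and t = ⌊τℓ(n)⌋, with ℓ(n) → ∞ and ℓ(n)/n → 0. Then for each j ∈ {k-r+1, …, k}, exp(λ_j^{(t)}) = 1 + C(j, k-r+1)·(t/n)^{j-k+r-1}·(e^{λ} - 1) + O(ℓ(n)^{j-k+r-2}/n^{j-k+r-1} · max{1, ℓ(n)^2/n}) as n → ∞. -/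
/-!
Exponentiating the recursion turns `exp λ_j^{(s)}` into the product
`∏_{u<s} (1 + p_u (exp λ_{j-1}^{(u)} - 1))` with `p_u = j / N(t-u) = j/n + O(ℓ/n²)`.
Induct on the depth `m = j - (k-r+1)`; at depth `0` the value is exactly `e^λ`.
Linearising the product, the main term `∑_{u<s} (j/n) C(j-1,k-r+1) (u/n)^(m-1) (e^λ - 1)` is a
Riemann sum for `C(j,k-r+1) (s/n)^m (e^λ - 1)` (as `j C(j-1,k-r+1) = m C(j,k-r+1)`) with error
`(s/n)^(m-1)/n`, while the perturbation of `p_u`, the inherited error and the quadratic remainder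
of the product are all `O((ℓ/n)^(m-1) · max (1/n) (ℓ/n)²)` uniformly in `s ≤ t ≤ τℓ`.
-/

open Finset Filter Asymptotics

theorem abs_prod_one_add_sub_one_sub_sum_le {ι : Type*} (F : Finset ι) (a : ι → ℝ) :
    |∏ i ∈ F, (1 + a i) - 1 - ∑ i ∈ F, a i| ≤
      (∑ i ∈ F, |a i|) ^ 2 * Real.exp (∑ i ∈ F, |a i|) := by
  classical
  induction F using Finset.induction_on with
  | empty => simp
  | insert i F hi ih =>
    rw [prod_insert hi, sum_insert hi, sum_insert hi]
    set P := ∏ i ∈ F, (1 + a i)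
    set S := ∑ i ∈ F, |a i|
    have hS : |∑ i ∈ F, a i| ≤ S := abs_sum_le_sum_abs _ _
    have hS0 : 0 ≤ S := sum_nonneg fun _ _ => abs_nonneg _
    have hx0 := abs_nonneg (a i)
    have hexp : Real.exp S * (1 + |a i|) ≤ Real.exp (|a i| + S) := by
      rw [Real.exp_add, mul_comm]
      gcongr
      linarith [Real.add_one_le_exp (|a i|)]
    have hone : 1 ≤ Real.exp (|a i| + S) := Real.one_le_exp (by positivity)
    calc |(1 + a i) * P - 1 - (a i + ∑ i ∈ F, a i)|
        = |(P - 1 - ∑ i ∈ F, a i) * (1 + a i) + a i * ∑ i ∈ F, a i| := by ring_nf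
      _ ≤ S ^ 2 * Real.exp S * (1 + |a i|) + |a i| * S := by
        refine (abs_add_le _ _).trans ?_
        rw [abs_mul, abs_mul]
        gcongr
        exact (abs_add_le _ _).trans (by rw [abs_one])
      _ ≤ (|a i| + S) ^ 2 * Real.exp (|a i| + S) := by
        have hE := Real.exp_pos (|a i| + S)
        nlinarith [mul_le_mul_of_nonneg_left hexp (sq_nonneg S),
          mul_le_mul_of_nonneg_left hone (mul_nonneg hx0 hS0),
          mul_nonneg (mul_nonneg hx0 hS0) hE.le, mul_nonneg (sq_nonneg (|a i|)) hE.le]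

theorem abs_sum_range_pow_sub_le (s m : ℕ) :
    |∑ i ∈ range s, (i : ℝ) ^ m - (s : ℝ) ^ (m + 1) / (m + 1)| ≤ (s : ℝ) ^ m := by
  have hmono : MonotoneOn (fun x : ℝ => x ^ m) (Set.Icc 0 (0 + s)) :=
    fun x hx y _ hxy => pow_le_pow_left₀ hx.1 hxy m
  have hlow : ∑ i ∈ range s, (i : ℝ) ^ m ≤ (s : ℝ) ^ (m + 1) / (m + 1) := by
    simpa [integral_pow] using hmono.sum_le_integral
  have hupp : (s : ℝ) ^ (m + 1) / (m + 1) ≤ ∑ i ∈ range s, ((i : ℝ) + 1) ^ m := by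
    simpa [integral_pow] using hmono.integral_le_sum
  have hshift :
      ∑ i ∈ range s, ((i : ℝ) + 1) ^ m ≤ ∑ i ∈ range s, (i : ℝ) ^ m + (s : ℝ) ^ m := by
    have h1 := sum_range_succ' (fun i => (i : ℝ) ^ m) s
    have h2 := sum_range_succ (fun i => (i : ℝ) ^ m) s
    push_cast at h1 h2
    nlinarith [pow_nonneg (le_refl (0 : ℝ)) m]
  rw [abs_le]
  constructor <;> linarith

theorem abs_sum_range_div_pow_sub_le {n : ℝ} (hn : 0 < n) (s m : ℕ) :
    |∑ u ∈ range s, ((u : ℝ) / n) ^ m / n - (s / n) ^ (m + 1) / (m + 1)|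
      ≤ (s / n) ^ m / n := by
  have hscale : ∑ u ∈ range s, ((u : ℝ) / n) ^ m / n - (s / n) ^ (m + 1) / (m + 1)
      = (∑ u ∈ range s, (u : ℝ) ^ m - (s : ℝ) ^ (m + 1) / (m + 1)) / n ^ (m + 1) := by
    simp_rw [div_pow, sub_div, sum_div, pow_succ]
    field_simp
  rw [hscale, abs_div, abs_of_pos (pow_pos hn _)]
  calc |∑ u ∈ range s, (u : ℝ) ^ m - (s : ℝ) ^ (m + 1) / (m + 1)| / n ^ (m + 1)
      ≤ (s : ℝ) ^ m / n ^ (m + 1) := by gcongr; exact abs_sum_range_pow_sub_le s m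
    _ = (s / n) ^ m / n := by rw [div_pow, pow_succ, div_div]

section RiemannSum

variable {n J c B δ ε : ℝ} {m s : ℕ} {p X : ℕ → ℝ}

theorem abs_le_of_abs_sub_pow_mul_le (hn : 0 < n) (hc : 0 ≤ c)
    (hX : ∀ u < s, |X u - c * (u / n) ^ m * B| ≤ ε) :
    ∀ u < s, |X u| ≤ c * |B| * (s / n) ^ m + ε := by
  intro u hu
  have hus : (u : ℝ) / n ≤ s / n := by gcongr
  calc |X u| ≤ |c * (u / n) ^ m * B| + ε := by
        linarith [abs_sub_abs_le_abs_sub (X u) (c * (u / n) ^ m * B), hX u hu]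
    _ = c * |B| * (u / n) ^ m + ε := by
        rw [abs_mul, abs_mul, abs_of_nonneg hc, abs_of_nonneg (by positivity)]; ring
    _ ≤ c * |B| * (s / n) ^ m + ε := by gcongr

theorem abs_sum_mul_sub_le (hn : 0 < n) (hJ : 0 ≤ J) (hc : 0 ≤ c)
    (hp : ∀ u < s, |p u - J / n| ≤ δ / n)
    (hX : ∀ u < s, |X u - c * (u / n) ^ m * B| ≤ ε) :
    |∑ u ∈ range s, p u * X u - J * c / (m + 1) * (s / n) ^ (m + 1) * B| ≤
      s / n * δ * (c * |B| * (s / n) ^ m + ε) + J * (s / n) * ε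
        + J * (c * |B|) * (s / n) ^ m / n := by
  have hXs := abs_le_of_abs_sub_pow_mul_le hn hc hX
  have hsplit : ∑ u ∈ range s, p u * X u - J * c / (m + 1) * (s / n) ^ (m + 1) * B =
      ∑ u ∈ range s, (p u - J / n) * X u
        + J / n * ∑ u ∈ range s, (X u - c * (u / n) ^ m * B)
        + J * c * B * (∑ u ∈ range s, ((u : ℝ) / n) ^ m / n - (s / n) ^ (m + 1) / (m + 1)) := by
    rw [mul_sub, mul_sum, mul_sum, ← sum_add_distrib, ← add_sub_assoc, ← sum_add_distrib]
    congr 1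
    · exact sum_congr rfl fun u _ => by ring
    · ring
  have h1 :
      |∑ u ∈ range s, (p u - J / n) * X u| ≤ s / n * δ * (c * |B| * (s / n) ^ m + ε) := by
    calc |∑ u ∈ range s, (p u - J / n) * X u|
        ≤ ∑ u ∈ range s, δ / n * (c * |B| * (s / n) ^ m + ε) := by
          refine (abs_sum_le_sum_abs _ _).trans (sum_le_sum fun u hu => ?_)
          rw [mem_range] at hu
          rw [abs_mul]
          exact mul_le_mul (hp u hu) (hXs u hu) (abs_nonneg _) ((abs_nonneg _).trans (hp u hu))
      _ = s / n * δ * (c * |B| * (s / n) ^ m + ε) := by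
          rw [sum_const, card_range, nsmul_eq_mul]; ring
  have h2 : |J / n * ∑ u ∈ range s, (X u - c * (u / n) ^ m * B)| ≤ J * (s / n) * ε := by
    calc |J / n * ∑ u ∈ range s, (X u - c * (u / n) ^ m * B)|
        ≤ J / n * ∑ u ∈ range s, ε := by
          rw [abs_mul, abs_of_nonneg (by positivity)]
          gcongr
          exact (abs_sum_le_sum_abs _ _).trans (sum_le_sum fun u hu => hX u (mem_range.1 hu))
      _ = J * (s / n) * ε := by
          rw [sum_const, card_range, nsmul_eq_mul]; ring
  have h3 : |J * c * B * (∑ u ∈ range s, ((u : ℝ) / n) ^ m / n - (s / n) ^ (m + 1) / (m + 1))|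
      ≤ J * (c * |B|) * (s / n) ^ m / n := by
    rw [abs_mul, abs_mul, abs_of_nonneg (mul_nonneg hJ hc), mul_assoc J, mul_div_assoc]
    gcongr
    exact abs_sum_range_div_pow_sub_le hn s m
  rw [hsplit]
  exact (abs_add_le _ _).trans (add_le_add ((abs_add_le _ _).trans (add_le_add h1 h2)) h3)

theorem abs_prod_one_add_mul_sub_le {P : ℝ} (hn : 0 < n) (hJ : 0 ≤ J) (hc : 0 ≤ c)
    (hp : ∀ u < s, |p u - J / n| ≤ δ / n) (hpP : ∀ u < s, |p u| ≤ P / n)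
    (hX : ∀ u < s, |X u - c * (u / n) ^ m * B| ≤ ε) :
    |∏ u ∈ range s, (1 + p u * X u) - (1 + J * c / (m + 1) * (s / n) ^ (m + 1) * B)| ≤
      s / n * δ * (c * |B| * (s / n) ^ m + ε) + J * (s / n) * ε
        + J * (c * |B|) * (s / n) ^ m / n
        + (s / n * P * (c * |B| * (s / n) ^ m + ε)) ^ 2
          * Real.exp (s / n * P * (c * |B| * (s / n) ^ m + ε)) := by
  have hXs := abs_le_of_abs_sub_pow_mul_le hn hc hX
  have hS0 : 0 ≤ ∑ u ∈ range s, |p u * X u| := sum_nonneg fun _ _ => abs_nonneg _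
  have hS : ∑ u ∈ range s, |p u * X u| ≤ s / n * P * (c * |B| * (s / n) ^ m + ε) := by
    calc ∑ u ∈ range s, |p u * X u|
        ≤ ∑ u ∈ range s, P / n * (c * |B| * (s / n) ^ m + ε) := by
          refine sum_le_sum fun u hu => ?_
          rw [mem_range] at hu
          rw [abs_mul]
          exact mul_le_mul (hpP u hu) (hXs u hu) (abs_nonneg _) ((abs_nonneg _).trans (hpP u hu))
      _ = s / n * P * (c * |B| * (s / n) ^ m + ε) := by
          rw [sum_const, card_range, nsmul_eq_mul]; ring
  have hlin := abs_prod_one_add_sub_one_sub_sum_le (range s) (fun u => p u * X u)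
  have hsum := abs_sum_mul_sub_le hn hJ hc hp hX
  have hsq : (∑ u ∈ range s, |p u * X u|) ^ 2 * Real.exp (∑ u ∈ range s, |p u * X u|) ≤
      (s / n * P * (c * |B| * (s / n) ^ m + ε)) ^ 2
        * Real.exp (s / n * P * (c * |B| * (s / n) ^ m + ε)) := by gcongr
  calc |∏ u ∈ range s, (1 + p u * X u) - (1 + J * c / (m + 1) * (s / n) ^ (m + 1) * B)|
      = |(∏ u ∈ range s, (1 + p u * X u) - 1 - ∑ u ∈ range s, p u * X u)
          + (∑ u ∈ range s, p u * X u - J * c / (m + 1) * (s / n) ^ (m + 1) * B)| := by ring_nf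
    _ ≤ _ := (abs_add_le _ _).trans (by linarith)

end RiemannSum

theorem exp_eq_prod_of_eq_add_log {x f : ℕ → ℝ} {S : ℕ} (h0 : x 0 = 0)
    (hf : ∀ u < S, 0 < f u) (hx : ∀ u < S, x (u + 1) = x u + Real.log (f u)) :
    ∀ s ≤ S, Real.exp (x s) = ∏ u ∈ range s, f u := by
  intro s hs
  induction s with
  | zero => simp [h0]
  | succ s ih =>
    rw [hx s hs, Real.exp_add, Real.exp_log (hf s hs), ih (by omega), prod_range_succ]

theorem one_add_mul_sub_one_pos {p E : ℝ} (hp : 0 ≤ p) (hp1 : p ≤ 1 / 2) (hE : 0 < E) :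
    0 < 1 + p * (E - 1) := by
  nlinarith [mul_nonneg hp hE.le]

theorem abs_div_sub_div_le {J x y : ℝ} (hJ : 0 ≤ J) (hy : 0 < y) (hyx : y ≤ 2 * x)
    (hxy : x ≤ y) :
    |J / x - J / y| ≤ 2 * J * (y - x) / y ^ 2 := by
  have hx : 0 < x := by linarith
  have hnum : 0 ≤ J * (y - x) := mul_nonneg hJ (sub_nonneg.2 hxy)
  have hdiff : J / x - J / y = J * (y - x) / (x * y) := by field_simp
  calc |J / x - J / y| = J * (y - x) / (x * y) := by
        rw [hdiff, abs_of_nonneg (by positivity)]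
    _ ≤ 2 * J * (y - x) / y ^ 2 := by
        rw [div_le_div_iff₀ (by positivity) (by positivity)]
        nlinarith [mul_le_mul_of_nonneg_left hyx (mul_nonneg hnum hy.le)]

theorem mul_le_of_le_pow_add {L Y a b Z : ℝ} (m : ℕ) (hL : 0 ≤ L) (hL1 : L ≤ 1)
    (hLZ : L ^ (m + 2) ≤ Z) (ha : 0 ≤ a) (hb : 0 ≤ b) (hZ : 0 ≤ Z)
    (hY : Y ≤ a * L ^ (m + 1) + b * Z) : L * Y ≤ (a + b) * Z := by
  calc L * Y ≤ L * (a * L ^ (m + 1) + b * Z) := by gcongr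
    _ = a * L ^ (m + 2) + L * (b * Z) := by ring
    _ ≤ a * Z + 1 * (b * Z) := by gcongr
    _ = (a + b) * Z := by ring

theorem sq_mul_exp_le_of_le_pow_add {L Y a b Z P : ℝ} (m : ℕ) (hL : 0 ≤ L) (hL1 : L ≤ 1)
    (hLZ : L ^ (m + 2) ≤ Z) (hZ1 : Z ≤ 1) (ha : 0 ≤ a) (hb : 0 ≤ b) (hP : 0 ≤ P)
    (hY0 : 0 ≤ Y) (hY : Y ≤ a * L ^ (m + 1) + b * Z) :
    (P * Y) ^ 2 * Real.exp (P * Y)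
      ≤ P ^ 2 * (2 * (a ^ 2 + b ^ 2)) * Real.exp (P * (a + b)) * Z := by
  have hZ : 0 ≤ Z := (pow_nonneg hL _).trans hLZ
  have hL2m : L ^ (2 * m + 2) ≤ Z := (pow_le_pow_of_le_one hL hL1 (by omega)).trans hLZ
  have hZ2 : Z ^ 2 ≤ Z := by nlinarith
  have hYab : Y ≤ a + b := hY.trans (by
    gcongr
    · exact mul_le_of_le_one_right ha (pow_le_one₀ hL hL1)
    · exact mul_le_of_le_one_right hb hZ1)
  have hY2 : Y ^ 2 ≤ 2 * (a ^ 2 + b ^ 2) * Z := by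
    calc Y ^ 2 ≤ (a * L ^ (m + 1) + b * Z) ^ 2 := by gcongr
      _ ≤ 2 * ((a * L ^ (m + 1)) ^ 2 + (b * Z) ^ 2) := by
        nlinarith [sq_nonneg (a * L ^ (m + 1) - b * Z)]
      _ = 2 * (a ^ 2 * L ^ (2 * m + 2) + b ^ 2 * Z ^ 2) := by ring
      _ ≤ 2 * (a ^ 2 * Z + b ^ 2 * Z) := by gcongr
      _ = 2 * (a ^ 2 + b ^ 2) * Z := by ring
  calc (P * Y) ^ 2 * Real.exp (P * Y)
      ≤ P ^ 2 * (2 * (a ^ 2 + b ^ 2) * Z) * Real.exp (P * (a + b)) := by rw [mul_pow]; gcongr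
    _ = P ^ 2 * (2 * (a ^ 2 + b ^ 2)) * Real.exp (P * (a + b)) * Z := by ring

/-- Applied with `q = s/n`, `L = ℓ/n`, `w = max 1 (ℓ²/n) / n` and `ε` the error inherited from
depth `m`; the left side is the bound of `abs_prod_one_add_mul_sub_le`. -/
theorem exists_step_error_le {J D P A C τ : ℝ} (m : ℕ) (hJ : 0 ≤ J) (hD : 0 ≤ D)
    (hP : 0 ≤ P) (hA : 0 ≤ A) (hC : 0 ≤ C) (hτ : 0 ≤ τ) :
    ∃ K, 0 ≤ K ∧ ∀ q L w n ε : ℝ, 0 ≤ q → q ≤ τ * L → 0 ≤ L → L ≤ 1 → L ^ 2 ≤ w →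
      w ≤ 1 → 0 < n → 1 / n ≤ w → 0 ≤ ε → L * ε ≤ C * (L ^ m * w) →
      q * (D * L) * (A * q ^ m + ε) + J * q * ε + J * A * q ^ m / n
        + (q * P * (A * q ^ m + ε)) ^ 2 * Real.exp (q * P * (A * q ^ m + ε))
        ≤ K * (L ^ m * w) := by
  set a := A * τ ^ (m + 1)
  set b := τ * C
  refine ⟨D * (a + b) + J * b + J * A * τ ^ m
      + P ^ 2 * (2 * (a ^ 2 + b ^ 2)) * Real.exp (P * (a + b)), by positivity,
    fun q L w n ε hq hqL hL hL1 hLw hw1 hn hnw hε hLε => ?_⟩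
  set Z := L ^ m * w
  have hw : 0 ≤ w := (sq_nonneg L).trans hLw
  have hZ : 0 ≤ Z := by positivity
  have hZ1 : Z ≤ 1 := mul_le_one₀ (pow_le_one₀ hL hL1) hw hw1
  have hLZ : L ^ (m + 2) ≤ Z := by
    rw [pow_add]; exact mul_le_mul_of_nonneg_left hLw (by positivity)
  have hqε : q * ε ≤ b * Z := by
    calc q * ε ≤ τ * (L * ε) := by rw [← mul_assoc]; gcongr
      _ ≤ τ * (C * Z) := by gcongr
      _ = b * Z := by ring
  set Y := q * (A * q ^ m + ε)
  have hY0 : 0 ≤ Y := by positivity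
  have hY : Y ≤ a * L ^ (m + 1) + b * Z := by
    have hq1 : q ^ (m + 1) ≤ τ ^ (m + 1) * L ^ (m + 1) := by rw [← mul_pow]; gcongr
    calc Y = A * q ^ (m + 1) + q * ε := by ring
      _ ≤ A * (τ ^ (m + 1) * L ^ (m + 1)) + b * Z := by gcongr
      _ = a * L ^ (m + 1) + b * Z := by ring
  have h1 : q * (D * L) * (A * q ^ m + ε) ≤ D * (a + b) * Z := by
    calc q * (D * L) * (A * q ^ m + ε) = D * (L * Y) := by ring
      _ ≤ D * ((a + b) * Z) := mul_le_mul_of_nonneg_left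
        (mul_le_of_le_pow_add m hL hL1 hLZ (by positivity) (by positivity) hZ hY) hD
      _ = D * (a + b) * Z := by ring
  have h2 : J * q * ε ≤ J * b * Z := by
    rw [mul_assoc, mul_assoc]; gcongr
  have h3 : J * A * q ^ m / n ≤ J * A * τ ^ m * Z := by
    have hqm : q ^ m ≤ τ ^ m * L ^ m := by rw [← mul_pow]; gcongr
    calc J * A * q ^ m / n = J * A * q ^ m * (1 / n) := by ring
      _ ≤ J * A * (τ ^ m * L ^ m) * w := by gcongr
      _ = J * A * τ ^ m * Z := by ring
  have h4 : (q * P * (A * q ^ m + ε)) ^ 2 * Real.exp (q * P * (A * q ^ m + ε))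
      ≤ P ^ 2 * (2 * (a ^ 2 + b ^ 2)) * Real.exp (P * (a + b)) * Z := by
    rw [show q * P * (A * q ^ m + ε) = P * Y by ring]
    exact sq_mul_exp_le_of_le_pow_add m hL hL1 hLZ hZ1 (by positivity) (by positivity) hP hY0 hY
  linarith

theorem sq_div_le_max_one_div (ℓ : ℝ) {n : ℝ} (hn : 0 ≤ n) :
    (ℓ / n) ^ 2 ≤ max 1 (ℓ ^ 2 / n) / n := by
  rw [div_pow, sq n, ← div_div]
  gcongr
  exact le_max_right _ _

theorem max_one_div_div_le_one {ℓ n : ℝ} (hn : 1 ≤ n) (hℓ : 0 ≤ ℓ) (hℓn : ℓ ≤ n) :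
    max 1 (ℓ ^ 2 / n) / n ≤ 1 := by
  rw [div_le_one (by linarith)]
  refine max_le hn ?_
  rw [div_le_iff₀ (by linarith)]
  nlinarith

theorem eventually_one_le_and_mul_le {ℓ : ℕ → ℕ}
    (hℓ : Tendsto (fun n => (ℓ n : ℝ)) atTop atTop)
    (hℓn : Tendsto (fun n => (ℓ n : ℝ) / n) atTop (nhds 0)) {a : ℝ} (ha : 0 < a) (k : ℕ) :
    ∀ᶠ n in atTop, 1 ≤ (ℓ n : ℝ) ∧ a * ℓ n ≤ n ∧ k ≤ n := by
  filter_upwards [hℓ.eventually_ge_atTop 1, hℓn.eventually (eventually_le_nhds (inv_pos.2 ha)),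
    eventually_ge_atTop (max k 1)] with n h1 h2 h3
  have hn : (0 : ℝ) < n := by exact_mod_cast (le_max_right k 1).trans h3
  refine ⟨h1, ?_, le_of_max_le_left h3⟩
  rw [div_le_iff₀ hn] at h2
  calc a * ℓ n ≤ a * (a⁻¹ * n) := by gcongr
    _ = n := by field_simp

/-- The error term of the theorem at depth `m = j - (k - r + 1)`. The integer exponent makes
`mul_errScale` hold also at `m = 0`. -/
noncomputable def errScale (ℓ : ℕ → ℕ) (m n : ℕ) : ℝ :=
  ((ℓ n : ℝ) / n) ^ ((m : ℤ) - 1) * (max 1 ((ℓ n : ℝ) ^ 2 / n) / n)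

theorem errScale_nonneg (ℓ : ℕ → ℕ) (m n : ℕ) : 0 ≤ errScale ℓ m n := by
  unfold errScale; positivity

theorem errScale_succ (ℓ : ℕ → ℕ) (m n : ℕ) :
    errScale ℓ (m + 1) n = ((ℓ n : ℝ) / n) ^ m * (max 1 ((ℓ n : ℝ) ^ 2 / n) / n) := by
  simp [errScale]

theorem mul_errScale {ℓ : ℕ → ℕ} {n : ℕ} (hℓ : ℓ n ≠ 0) (hn : n ≠ 0) (m : ℕ) :
    (ℓ n : ℝ) / n * errScale ℓ m n = errScale ℓ (m + 1) n := by
  have : (ℓ n : ℝ) / n ≠ 0 := by positivity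
  rw [errScale_succ, errScale, zpow_natCast_sub_one₀ this]
  field_simp

theorem errScale_eq {ℓ : ℕ → ℕ} {n : ℕ} (hn : n ≠ 0) (m : ℕ) :
    errScale ℓ m n
      = (ℓ n : ℝ) ^ ((m : ℤ) - 1) / (n : ℝ) ^ (m : ℤ) * max 1 ((ℓ n : ℝ) ^ 2 / n) := by
  have hn' : (n : ℝ) ≠ 0 := by exact_mod_cast hn
  rw [errScale, div_zpow, zpow_sub_one₀ hn']
  field_simp

section DualRecursion

variable {τ : ℝ} {ℓ t : ℕ → ℕ} {N : ℕ → ℕ → ℝ} {lam : ℕ → ℕ → ℕ → ℝ}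

theorem N_mem_Icc_and_sub_N_le {n : ℕ} (ht : (t n : ℝ) ≤ τ * ℓ n)
    (hN : ∀ a, N n a = n - ℓ n - a) (hℓn : 2 * (1 + τ) * ℓ n ≤ n) (u : ℕ) :
    N n (t n - u) ∈ Set.Icc ((n : ℝ) / 2) n ∧ n - N n (t n - u) ≤ (1 + τ) * ℓ n := by
  have h0 : (0 : ℝ) ≤ ((t n - u : ℕ) : ℝ) := Nat.cast_nonneg _
  have h1 : ((t n - u : ℕ) : ℝ) ≤ τ * ℓ n := (Nat.cast_le.2 (Nat.sub_le _ _)).trans ht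
  rw [hN, Set.mem_Icc]
  refine ⟨⟨?_, ?_⟩, ?_⟩ <;> nlinarith [(ℓ n).cast_nonneg (α := ℝ)]

theorem abs_exp_lam_sub_le_of_prev {n j m : ℕ} {c B ε : ℝ}
    (ht : (t n : ℝ) ≤ τ * ℓ n) (hN : ∀ a, N n a = n - ℓ n - a)
    (hn : 0 < n) (hℓn : 2 * (1 + τ) * ℓ n ≤ n) (hjn : 4 * j ≤ n) (hc : 0 ≤ c)
    (hzero : lam n j 0 = 0)
    (hrec : ∀ s, 1 ≤ s → s ≤ t n → lam n j s = lam n j (s - 1) +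
      Real.log (1 - (j : ℝ) / N n (t n - s + 1)
        + ((j : ℝ) / N n (t n - s + 1)) * Real.exp (lam n (j - 1) (s - 1))))
    (hprev : ∀ u ≤ t n, |Real.exp (lam n (j - 1) u) - (1 + c * (u / n) ^ m * B)| ≤ ε) :
    ∀ s ≤ t n, |Real.exp (lam n j s) - (1 + j * c / (m + 1) * (s / n) ^ (m + 1) * B)| ≤
      s / n * (2 * j * (1 + τ) * (ℓ n / n)) * (c * |B| * (s / n) ^ m + ε) + j * (s / n) * ε
        + j * (c * |B|) * (s / n) ^ m / n
        + (s / n * (2 * j) * (c * |B| * (s / n) ^ m + ε)) ^ 2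
          * Real.exp (s / n * (2 * j) * (c * |B| * (s / n) ^ m + ε)) := by
  intro s hs
  have hn' : (0 : ℝ) < n := by exact_mod_cast hn
  have hj : (0 : ℝ) ≤ j := j.cast_nonneg
  have hjn' : 4 * (j : ℝ) ≤ n := by exact_mod_cast hjn
  have hNbd := N_mem_Icc_and_sub_N_le ht hN hℓn
  set p : ℕ → ℝ := fun u => j / N n (t n - u)
  set X : ℕ → ℝ := fun u => Real.exp (lam n (j - 1) u) - 1
  have hp : ∀ u, |p u - j / n| ≤ 2 * j * (1 + τ) * (ℓ n / n) / n := fun u => by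
    obtain ⟨⟨h1, h2⟩, h3⟩ := hNbd u
    calc |p u - j / n| ≤ 2 * j * (n - N n (t n - u)) / (n : ℝ) ^ 2 :=
          abs_div_sub_div_le hj hn' (by linarith) h2
      _ ≤ 2 * j * ((1 + τ) * ℓ n) / (n : ℝ) ^ 2 := by gcongr
      _ = 2 * j * (1 + τ) * (ℓ n / n) / n := by ring
  have hp0 : ∀ u, 0 ≤ p u := fun u => div_nonneg hj (by linarith [(hNbd u).1.1])
  have hpP : ∀ u, |p u| ≤ 2 * j / n := fun u => by
    rw [abs_of_nonneg (hp0 u), div_le_div_iff₀ (by linarith [(hNbd u).1.1]) hn']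
    nlinarith [(hNbd u).1.1]
  have hp_half : ∀ u, p u ≤ 1 / 2 := fun u =>
    (le_abs_self _).trans ((hpP u).trans (by rw [div_le_iff₀ hn']; linarith))
  have hprod : Real.exp (lam n j s) = ∏ u ∈ range s, (1 + p u * X u) := by
    refine exp_eq_prod_of_eq_add_log hzero (fun u _ => ?_) (fun u hu => ?_) s hs
    · exact one_add_mul_sub_one_pos (hp0 u) (hp_half u) (Real.exp_pos _)
    · rw [hrec (u + 1) (by omega) hu, Nat.add_sub_cancel,
        show t n - (u + 1) + 1 = t n - u by omega]
      congr 2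
      simp only [p, X]
      ring
  rw [hprod]
  exact abs_prod_one_add_mul_sub_le hn' hj hc (fun u _ => hp u) (fun u _ => hpP u)
    (fun u hu => by simpa [X, sub_sub, add_comm, add_left_comm] using hprev u (by omega))

theorem exists_abs_exp_lam_sub_le_succ {k b m : ℕ} {lam0 : ℝ} (hτ : 0 ≤ τ)
    (hℓ : Tendsto (fun n => (ℓ n : ℝ)) atTop atTop)
    (hℓn : Tendsto (fun n => (ℓ n : ℝ) / n) atTop (nhds 0))
    (ht : ∀ n, (t n : ℝ) ≤ τ * ℓ n) (hN : ∀ n a, N n a = (n : ℝ) - (ℓ n : ℝ) - a)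
    (hzero : ∀ n, lam n (b + m + 1) 0 = 0)
    (hrec : ∀ n s, 1 ≤ s →
      lam n (b + m + 1) s = lam n (b + m + 1) (s - 1) +
        Real.log (1 - ((b + m + 1 : ℕ) : ℝ) / N n (t n - s + 1)
          + (((b + m + 1 : ℕ) : ℝ) / N n (t n - s + 1)) * Real.exp (lam n (b + m) (s - 1))))
    (hm : b + m + 1 ≤ k) {C : ℝ} (hC : 0 ≤ C)
    (hprev : ∀ᶠ n in atTop, ∀ s ≤ t n, |Real.exp (lam n (b + m) s) -
      (1 + ((b + m).choose b : ℝ) * ((s : ℝ) / n) ^ m * (Real.exp lam0 - 1))|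
        ≤ C * errScale ℓ m n) :
    ∃ K, 0 ≤ K ∧ ∀ᶠ n in atTop, ∀ s ≤ t n, |Real.exp (lam n (b + (m + 1)) s) -
      (1 + ((b + (m + 1)).choose b : ℝ) * ((s : ℝ) / n) ^ (m + 1) * (Real.exp lam0 - 1))|
        ≤ K * errScale ℓ (m + 1) n := by
  set J : ℝ := ((b + m + 1 : ℕ) : ℝ)
  set c : ℝ := ((b + m).choose b : ℝ)
  set B := Real.exp lam0 - 1
  have hchoose : ((b + (m + 1)).choose b : ℝ) = J * c / (m + 1) := by
    have h : (b + (m + 1)).choose b * (m + 1) = (b + m + 1) * (b + m).choose b := by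
      rw [Nat.choose_symm_add, ← Nat.add_assoc, ← Nat.add_one_mul_choose_eq,
        ← Nat.choose_symm_add]
    rw [eq_div_iff (by positivity)]
    simp only [J, c]
    exact_mod_cast h
  obtain ⟨K, hK0, hK⟩ := exists_step_error_le (J := J) (D := 2 * J * (1 + τ)) (P := 2 * J)
    (A := c * |B|) (C := C) m (by positivity) (by positivity) (by positivity) (by positivity) hC hτ
  refine ⟨K, hK0, ?_⟩
  filter_upwards [hprev,
    eventually_one_le_and_mul_le hℓ hℓn (a := 2 * (1 + τ)) (by positivity) (4 * k)]
    with n hprev ⟨hℓ1, hℓn', hkn⟩ s hs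
  have hn : 0 < n := by omega
  have hn' : (0 : ℝ) < n := by exact_mod_cast hn
  have hℓn'' : (ℓ n : ℝ) ≤ n := by nlinarith
  have hstep := abs_exp_lam_sub_le_of_prev (j := b + m + 1) (m := m) (c := c) (B := B) (ht n) (hN n)
    hn hℓn' (by omega) (by positivity) (hzero n) (fun s hs1 _ => hrec n s hs1)
    (by simpa using hprev) s hs
  rw [hchoose, errScale_succ]
  refine hstep.trans (hK _ _ _ _ _ (by positivity) ?_ (by positivity)
    (div_le_one_of_le₀ hℓn'' hn'.le) (sq_div_le_max_one_div _ hn'.le)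
    (max_one_div_div_le_one (by exact_mod_cast hn) (by positivity) hℓn'')
    hn' (by gcongr; exact le_max_left _ _) (mul_nonneg hC (errScale_nonneg _ _ _)) ?_)
  · rw [← mul_div_assoc]
    gcongr
    exact (Nat.cast_le.2 hs).trans (ht n)
  · rw [mul_left_comm, mul_errScale (Nat.one_le_iff_ne_zero.1 (by exact_mod_cast hℓ1)) hn.ne',
      errScale_succ]

theorem exists_abs_exp_lam_sub_le {k b : ℕ} {lam0 : ℝ} (hτ : 0 ≤ τ)
    (hℓ : Tendsto (fun n => (ℓ n : ℝ)) atTop atTop)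
    (hℓn : Tendsto (fun n => (ℓ n : ℝ) / n) atTop (nhds 0))
    (ht : ∀ n, (t n : ℝ) ≤ τ * ℓ n) (hN : ∀ n a, N n a = (n : ℝ) - (ℓ n : ℝ) - a)
    (hbase : ∀ n s, lam n b s = lam0)
    (hzero : ∀ n j, b + 1 ≤ j → j ≤ k → lam n j 0 = 0)
    (hrec : ∀ n j s, b + 1 ≤ j → j ≤ k → 1 ≤ s →
      lam n j s = lam n j (s - 1) +
        Real.log (1 - (j : ℝ) / N n (t n - s + 1)
          + ((j : ℝ) / N n (t n - s + 1)) * Real.exp (lam n (j - 1) (s - 1)))) :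
    ∀ m, b + m ≤ k → ∃ C, 0 ≤ C ∧ ∀ᶠ n in atTop, ∀ s ≤ t n,
      |Real.exp (lam n (b + m) s) -
          (1 + ((b + m).choose b : ℝ) * ((s : ℝ) / n) ^ m * (Real.exp lam0 - 1))|
        ≤ C * errScale ℓ m n := by
  intro m
  induction m with
  | zero => exact fun _ => ⟨0, le_rfl, .of_forall fun n s _ => by simp [hbase]⟩
  | succ m ih =>
    intro hm
    obtain ⟨C, hC, hprev⟩ := ih (by omega)
    exact exists_abs_exp_lam_sub_le_succ hτ hℓ hℓn ht hN (fun n => hzero n _ (by omega) hm)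
      (fun n s hs => hrec n _ s (by omega) hm hs) hm hC hprev

end DualRecursion

theorem stmt_16_general (k r : ℕ) (hk : r ≤ k) (τ lam0 : ℝ) (hτ : 0 < τ)
    (ℓ : ℕ → ℕ)
    (hℓ : Tendsto (fun n => (ℓ n : ℝ)) atTop atTop)
    (hℓn : Tendsto (fun n => (ℓ n : ℝ) / n) atTop (nhds 0))
    (t : ℕ → ℕ) (ht : ∀ n, t n = ⌊τ * (ℓ n : ℝ)⌋₊)
    (N : ℕ → ℕ → ℝ) (hN : ∀ n a, N n a = (n : ℝ) - (ℓ n : ℝ) - a)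
    (lam : ℕ → ℕ → ℕ → ℝ)
    (hbase : ∀ n s, lam n (k - r + 1) s = lam0)
    (hzero : ∀ n j, k - r + 2 ≤ j → j ≤ k → lam n j 0 = 0)
    (hrec : ∀ n j s, k - r + 2 ≤ j → j ≤ k → 1 ≤ s →
      lam n j s = lam n j (s - 1) +
        Real.log (1 - (j : ℝ) / N n (t n - s + 1)
          + ((j : ℝ) / N n (t n - s + 1)) * Real.exp (lam n (j - 1) (s - 1)))) :
    ∀ j, k - r + 1 ≤ j → j ≤ k →
      (fun n => Real.exp (lam n j (t n)) -
          (1 + (j.choose (k - r + 1) : ℝ) * ((t n : ℝ) / n) ^ (j - (k - r + 1))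
            * (Real.exp lam0 - 1)))
        =O[atTop]
      (fun n => (ℓ n : ℝ) ^ (((j : ℤ) - k + r) - 2) / (n : ℝ) ^ (((j : ℤ) - k + r) - 1)
          * max 1 ((ℓ n : ℝ) ^ 2 / n)) := by
  intro j hj1 hj2
  obtain ⟨m, rfl⟩ : ∃ m, j = k - r + 1 + m := ⟨j - (k - r + 1), by omega⟩
  have htτ : ∀ n, (t n : ℝ) ≤ τ * ℓ n := fun n => by
    rw [ht n]; exact Nat.floor_le (by positivity)
  obtain ⟨C, -, hC⟩ := exists_abs_exp_lam_sub_le hτ.le hℓ hℓn htτ hN hbase hzero hrec m hj2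
  have hexp₁ : ((k - r + 1 + m : ℕ) : ℤ) - k + r - 2 = (m : ℤ) - 1 := by omega
  have hexp₂ : ((k - r + 1 + m : ℕ) : ℤ) - k + r - 1 = (m : ℤ) := by omega
  rw [Nat.add_sub_cancel_left, hexp₁, hexp₂]
  refine IsBigO.of_bound C ?_
  filter_upwards [hC, eventually_ne_atTop 0] with n hn hn0
  rw [Real.norm_eq_abs, ← errScale_eq hn0, Real.norm_of_nonneg (errScale_nonneg _ _ _)]
  exact hn (t n) le_rfl

/-- Evolution of the dual recursion for the moment generating function.  Fix `k ≥ r ≥ 2`,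
`μ > 0`, `τ > 0` and `λ : ℝ`.  With `ℓ(n) → ∞`, `ℓ(n)/n → 0`, `t = t(n) = ⌊τ·ℓ(n)⌋`,
`N(a) = n - ℓ(n) - a`, and the recursion `λ_{k-r+1}^{(s)} = λ`, `λ_j^{(0)} = 0` and
`λ_j^{(s)} = λ_j^{(s-1)} + log(1 - j/N(t-s+1) + (j/N(t-s+1))·e^{λ_{j-1}^{(s-1)}})`
for `k-r+2 ≤ j ≤ k`, one has, for each `j ∈ {k-r+1, …, k}`,
`exp(λ_j^{(t)}) = 1 + C(j,k-r+1)·(t/n)^{j-k+r-1}·(e^λ - 1)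
  + O(ℓ(n)^{j-k+r-2}/n^{j-k+r-1}·max{1, ℓ(n)²/n})` as `n → ∞`. -/
theorem stmt_16 (k r : ℕ) (hr : 2 ≤ r) (hk : r ≤ k) (μ τ lam0 : ℝ) (hμ : 0 < μ) (hτ : 0 < τ)
    (ℓ : ℕ → ℕ)
    (hℓ : Tendsto (fun n => (ℓ n : ℝ)) atTop atTop)
    (hℓn : Tendsto (fun n => (ℓ n : ℝ) / n) atTop (nhds 0))
    (t : ℕ → ℕ) (ht : ∀ n, t n = ⌊τ * (ℓ n : ℝ)⌋₊)
    (N : ℕ → ℕ → ℝ) (hN : ∀ n a, N n a = (n : ℝ) - (ℓ n : ℝ) - a)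
    (lam : ℕ → ℕ → ℕ → ℝ)
    (hbase : ∀ n s, lam n (k - r + 1) s = lam0)
    (hzero : ∀ n j, k - r + 2 ≤ j → j ≤ k → lam n j 0 = 0)
    (hrec : ∀ n j s, k - r + 2 ≤ j → j ≤ k → 1 ≤ s →
      lam n j s = lam n j (s - 1) +
        Real.log (1 - (j : ℝ) / N n (t n - s + 1)
          + ((j : ℝ) / N n (t n - s + 1)) * Real.exp (lam n (j - 1) (s - 1)))) :
    ∀ j, k - r + 1 ≤ j → j ≤ k →
      (fun n => Real.exp (lam n j (t n)) -
          (1 + (j.choose (k - r + 1) : ℝ) * ((t n : ℝ) / n) ^ (j - (k - r + 1))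
            * (Real.exp lam0 - 1)))
        =O[atTop]
      (fun n => (ℓ n : ℝ) ^ (((j : ℤ) - k + r) - 2) / (n : ℝ) ^ (((j : ℤ) - k + r) - 1)
          * max 1 ((ℓ n : ℝ) ^ 2 / n)) :=
  stmt_16_general k r hk τ lam0 hτ ℓ hℓ hℓn t ht N hN lam hbase hzero hrec
end
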